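/- arXiv:2102.06985 — 6 statements merged into one kernel-verified Lean document; each statement's English description precedes it below -/
import Mathlib

section
/- For any finite sequence of real weights x = ⟨x_0, ..., x_m⟩, any bounded infinite sequence of real weights y = ⟨y_n⟩_{n≥0}, and any discount factor γ ∈ [0,1), the lower past-discounted payoff of the concatenation xy equals that of y: liminf_{n→∞} Σ_{k=0}^{n} γ^{n-k} (xy)_k = liminf_{n→∞} Σ_{k=0}^{n} γ^{n-k} y_k. That is, the past-discounted payoff is prefix-independent. -/
open Filter Finset

/-- Prefix-independence of the (lower) past-discounted payoff. -/
theorem pastDiscounted_prefix_independent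
    (m : ℕ) (x y : ℕ → ℝ) (C : ℝ) (hy : ∀ n, |y n| ≤ C)
    (γ : ℝ) (hγ0 : 0 ≤ γ) (hγ1 : γ < 1) :
    Filter.liminf (fun n => ∑ k ∈ Finset.range (n + 1),
        γ ^ (n - k) * (if k ≤ m then x k else y (k - (m + 1)))) Filter.atTop
      = Filter.liminf (fun n => ∑ k ∈ Finset.range (n + 1),
        γ ^ (n - k) * y k) Filter.atTop := by
  set g : ℕ → ℝ := fun n => ∑ k ∈ Finset.range (n + 1), γ ^ (n - k) * y k with hg
  set f : ℕ → ℝ := fun n => ∑ k ∈ Finset.range (n + 1),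
      γ ^ (n - k) * (if k ≤ m then x k else y (k - (m + 1))) with hf
  set ε : ℕ → ℝ := fun n => ∑ k ∈ Finset.range (m + 1), γ ^ (n + (m + 1) - k) * x k with hε
  -- decomposition of the shifted f
  have hdecomp : ∀ n, f (n + (m + 1)) = ε n + g n := by
    intro n
    have h1 : n + (m + 1) + 1 = (m + 1) + (n + 1) := by ring
    simp only [hf]
    rw [h1, Finset.sum_range_add]
    congr 1
    · apply Finset.sum_congr rfl
      intro k hk
      have hk' : k ≤ m := Nat.lt_succ_iff.mp (Finset.mem_range.mp hk)
      rw [if_pos hk']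
    · apply Finset.sum_congr rfl
      intro k hk
      have hk' : ¬ (m + 1 + k ≤ m) := by omega
      rw [if_neg hk']
      congr 2
      · omega
      · congr 1
        omega
  -- ε tends to 0
  have hε0 : Tendsto ε atTop (nhds 0) := by
    have : ∀ k ∈ Finset.range (m + 1),
        Tendsto (fun n => γ ^ (n + (m + 1) - k) * x k) atTop (nhds 0) := by
      intro k hk
      have hγabs : |γ| < 1 := by rw [abs_of_nonneg hγ0]; exact hγ1
      have h1 : Tendsto (fun n : ℕ => γ ^ n) atTop (nhds 0) :=
        tendsto_pow_atTop_nhds_zero_of_lt_one hγ0 hγ1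
      have h2 : Tendsto (fun n : ℕ => n + (m + 1) - k) atTop atTop := by
        apply tendsto_atTop_atTop.mpr
        intro b
        exact ⟨b + k, fun a ha => by omega⟩
      have h3 : Tendsto (fun n : ℕ => γ ^ (n + (m + 1) - k)) atTop (nhds 0) :=
        h1.comp h2
      simpa using h3.mul_const (x k)
    have := tendsto_finset_sum (Finset.range (m + 1)) this
    simpa using this
  -- g is bounded
  have hC : 0 ≤ C := le_trans (abs_nonneg _) (hy 0)
  have h1γ : 0 < 1 - γ := by linarith
  have hgbound : ∀ n, |g n| ≤ C / (1 - γ) := by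
    intro n
    calc |g n| ≤ ∑ k ∈ Finset.range (n + 1), |γ ^ (n - k) * y k| :=
          Finset.abs_sum_le_sum_abs _ _
      _ ≤ ∑ k ∈ Finset.range (n + 1), γ ^ (n - k) * C := by
          apply Finset.sum_le_sum
          intro k hk
          rw [abs_mul, abs_of_nonneg (pow_nonneg hγ0 _)]
          exact mul_le_mul_of_nonneg_left (hy k) (pow_nonneg hγ0 _)
      _ = (∑ k ∈ Finset.range (n + 1), γ ^ (n - k)) * C := by
          rw [Finset.sum_mul]
      _ = (∑ k ∈ Finset.range (n + 1), γ ^ k) * C := by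
          congr 1
          rw [← Finset.sum_range_reflect]
          apply Finset.sum_congr rfl
          intro k hk
          have hk' := Finset.mem_range.mp hk
          congr 1
          omega
      _ ≤ (1 / (1 - γ)) * C := by
          apply mul_le_mul_of_nonneg_right _ hC
          have hne : γ ≠ 1 := ne_of_lt hγ1
          rw [geom_sum_eq hne]
          have heq2 : (γ ^ (n + 1) - 1) / (γ - 1) = (1 - γ ^ (n + 1)) / (1 - γ) := by
            rw [div_eq_div_iff (by linarith) (by linarith)]
            ring
          rw [heq2]
          have hpow : 0 ≤ γ ^ (n + 1) := pow_nonneg hγ0 _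
          exact div_le_div₀ zero_le_one (by linarith) h1γ le_rfl
      _ = C / (1 - γ) := by ring
  -- boundedness facts
  have hgub : IsBoundedUnder (· ≤ ·) atTop g :=
    isBoundedUnder_of ⟨C / (1 - γ), fun n => (abs_le.mp (hgbound n)).2⟩
  have hglb : IsBoundedUnder (· ≥ ·) atTop g :=
    isBoundedUnder_of ⟨-(C / (1 - γ)), fun n => (abs_le.mp (hgbound n)).1⟩
  have hεub : IsBoundedUnder (· ≤ ·) atTop ε := hε0.isBoundedUnder_le
  have hεlb : IsBoundedUnder (· ≥ ·) atTop ε := hε0.isBoundedUnder_ge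
  have hgcb : IsCoboundedUnder (· ≥ ·) atTop g := hgub.isCoboundedUnder_ge
  have hεlim : liminf ε atTop = 0 := hε0.liminf_eq
  have hεlimsup : limsup ε atTop = 0 := hε0.limsup_eq
  -- liminf of shifted f equals liminf f
  have hshift : liminf (fun n => f (n + (m + 1))) atTop = liminf f atTop :=
    Filter.liminf_nat_add f (m + 1)
  have heq : (fun n => f (n + (m + 1))) = ε + g := by
    funext n; exact hdecomp n
  have hle : liminf (ε + g) atTop ≤ liminf g atTop := by
    have := liminf_add_le (f := atTop) (u := ε) (v := g) hεlb hεub hglb hgcb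
    rwa [hεlimsup, zero_add] at this
  have hge : liminf g atTop ≤ liminf (ε + g) atTop := by
    have := le_liminf_add (f := atTop) (u := ε) (v := g) hεlb hεub hglb hgcb
    rwa [hεlim, zero_add] at this
  have : liminf (ε + g) atTop = liminf g atTop := le_antisymm hle hge
  rw [← hshift, heq, this]
end

section
/- The past-discounted payoff is not submixing: there exist bounded sequences x, y, z of reals and a discount factor γ ∈ [0,1) such that z is a shuffle of x and y but P_γ(z) > max{P_γ(x), P_γ(y)}. Concretely, with γ = 1/10, x = (2,1,200,100)^ω, y = (200,100,2,1)^ω, and z = (200,2,100,1)^ω (a valid shuffle of x and y), one has P_γ(z) > max{P_γ(x), P_γ(y)}. -/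
open Filter Finset

private lemma geomB (m : ℕ) : ∑ j ∈ Finset.range m, (1/10:ℝ)^j ≤ 10/9 := by
  rw [geom_sum_eq (by norm_num : (1/10:ℝ) ≠ 1)]
  have h : (0:ℝ) ≤ (1/10:ℝ)^m := by positivity
  rw [div_le_iff_of_neg (by norm_num : (1/10:ℝ) - 1 < 0)]
  nlinarith

private lemma S_nonneg (w : ℕ → ℝ) (hw0 : ∀ k, 0 ≤ w k) (n : ℕ) :
    0 ≤ ∑ k ∈ Finset.range (n + 1), (1/10:ℝ) ^ (n - k) * w k := by
  apply Finset.sum_nonneg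
  intro k _
  have := hw0 k
  positivity

private lemma S_le (w : ℕ → ℝ) (hw : ∀ k, w k ≤ 200) (n : ℕ) :
    ∑ k ∈ Finset.range (n + 1), (1/10:ℝ) ^ (n - k) * w k ≤ 2000/9 := by
  have h1 : ∑ k ∈ Finset.range (n + 1), (1/10:ℝ) ^ (n - k) * w k
      ≤ ∑ k ∈ Finset.range (n + 1), (1/10:ℝ) ^ (n - k) * 200 := by
    apply Finset.sum_le_sum
    intro k _
    have := hw k
    have hp : (0:ℝ) ≤ (1/10:ℝ)^(n-k) := by positivity
    nlinarith
  have h2 : ∑ k ∈ Finset.range (n + 1), (1/10:ℝ) ^ (n - k) * 200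
      = 200 * ∑ j ∈ Finset.range (n + 1), (1/10:ℝ) ^ j := by
    rw [Finset.mul_sum]
    have := Finset.sum_range_reflect (fun j => (200:ℝ) * (1/10:ℝ)^j) (n+1)
    rw [← this]
    apply Finset.sum_congr rfl
    intro k hk
    simp only [Nat.add_sub_cancel]
    ring
  have := geomB (n+1)
  linarith [h1, h2]

private lemma S_lower (w : ℕ → ℝ) (hw0 : ∀ k, 0 ≤ w k) (m : ℕ) :
    w (m+1) + (1/10) * w m ≤
      ∑ k ∈ Finset.range (m + 1 + 1), (1/10:ℝ) ^ (m + 1 - k) * w k := by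
  rw [Finset.sum_range_succ, Finset.sum_range_succ]
  simp only [Nat.add_sub_cancel, Nat.sub_self, pow_zero, pow_one]
  have hs : 0 ≤ ∑ k ∈ Finset.range m, (1/10:ℝ) ^ (m + 1 - k) * w k := by
    apply Finset.sum_nonneg; intro k _; have := hw0 k; positivity
  have : m + 1 - m = 1 := by omega
  rw [this]
  simp only [pow_one]
  linarith

private lemma S_upper_special (w : ℕ → ℝ) (hw : ∀ k, w k ≤ 200) (hw0 : ∀ k, 0 ≤ w k)
    (m : ℕ) (h1 : w (m+1) = 1) (h2 : w m = 2) :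
    ∑ k ∈ Finset.range (m + 1 + 1), (1/10:ℝ) ^ (m + 1 - k) * w k ≤ 7/2 := by
  rw [Finset.sum_range_succ, Finset.sum_range_succ]
  have hm : m + 1 - m = 1 := by omega
  rw [hm, Nat.sub_self, pow_zero, pow_one, h1, h2]
  have key : ∑ k ∈ Finset.range m, (1/10:ℝ) ^ (m + 1 - k) * w k ≤ 20/9 := by
    have h3 : ∑ k ∈ Finset.range m, (1/10:ℝ) ^ (m + 1 - k) * w k
        ≤ ∑ k ∈ Finset.range m, (1/100) * ((1/10:ℝ) ^ (m - 1 - k) * 200) := by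
      apply Finset.sum_le_sum
      intro k hk
      have hk' : k < m := Finset.mem_range.mp hk
      have he : m + 1 - k = (m - 1 - k) + 2 := by omega
      rw [he, pow_add]
      have := hw k
      have hp : (0:ℝ) ≤ (1/10:ℝ)^(m-1-k) := by positivity
      nlinarith
    have h4 : ∑ k ∈ Finset.range m, (1/100:ℝ) * ((1/10:ℝ) ^ (m - 1 - k) * 200)
        = 2 * ∑ j ∈ Finset.range m, (1/10:ℝ) ^ j := by
      rw [Finset.sum_range_reflect (fun j => (1/100:ℝ) * ((1/10:ℝ)^j * 200)) m,
        Finset.mul_sum]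
      apply Finset.sum_congr rfl
      intro k hk
      ring
    have := geomB m
    linarith
  linarith
/-- The past-discounted payoff is not submixing: with `γ = 1/10`,
`z = (200,2,100,1)^ω` is a shuffle of `x = (2,1,200,100)^ω` and
`y = (200,100,2,1)^ω`, yet `P_γ(z) > max (P_γ(x)) (P_γ(y))`. -/
theorem pastDiscounted_not_submixing :
    ∃ (x y z : ℕ → ℝ) (γ : ℝ), γ = 1 / 10 ∧
      (∀ k, x k = if k % 4 = 0 then 2 else if k % 4 = 1 then 1 else
                  if k % 4 = 2 then 200 else 100) ∧
      (∀ k, y k = if k % 4 = 0 then 200 else if k % 4 = 1 then 100 else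
                  if k % 4 = 2 then 2 else 1) ∧
      (∀ k, z k = if k % 4 = 0 then 200 else if k % 4 = 1 then 2 else
                  if k % 4 = 2 then 100 else 1) ∧
      (∃ ix iy : ℕ → ℕ, StrictMono ix ∧ StrictMono iy ∧
        (Set.range ix ∪ Set.range iy = Set.univ) ∧
        (Set.range ix ∩ Set.range iy = ∅) ∧
        (∀ n, z (ix n) = x n) ∧ (∀ n, z (iy n) = y n)) ∧
      Filter.liminf (fun n => ∑ k ∈ Finset.range (n + 1), γ ^ (n - k) * z k)
          Filter.atTop
        > max
          (Filter.liminf (fun n => ∑ k ∈ Finset.range (n + 1), γ ^ (n - k) * x k)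
            Filter.atTop)
          (Filter.liminf (fun n => ∑ k ∈ Finset.range (n + 1), γ ^ (n - k) * y k)
            Filter.atTop) := by
  set x : ℕ → ℝ := fun k => if k % 4 = 0 then 2 else if k % 4 = 1 then 1 else
      if k % 4 = 2 then 200 else 100 with hxdef
  set y : ℕ → ℝ := fun k => if k % 4 = 0 then 200 else if k % 4 = 1 then 100 else
      if k % 4 = 2 then 2 else 1 with hydef
  set z : ℕ → ℝ := fun k => if k % 4 = 0 then 200 else if k % 4 = 1 then 2 else
      if k % 4 = 2 then 100 else 1 with hzdef
  have xv0 : ∀ k, k % 4 = 0 → x k = 2 := by intro k hk; simp [hxdef, hk]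
  have xv1 : ∀ k, k % 4 = 1 → x k = 1 := by intro k hk; simp [hxdef, hk]
  have xv2 : ∀ k, k % 4 = 2 → x k = 200 := by intro k hk; simp [hxdef, hk]
  have xv3 : ∀ k, k % 4 = 3 → x k = 100 := by intro k hk; simp [hxdef, hk]
  have yv0 : ∀ k, k % 4 = 0 → y k = 200 := by intro k hk; simp [hydef, hk]
  have yv1 : ∀ k, k % 4 = 1 → y k = 100 := by intro k hk; simp [hydef, hk]
  have yv2 : ∀ k, k % 4 = 2 → y k = 2 := by intro k hk; simp [hydef, hk]
  have yv3 : ∀ k, k % 4 = 3 → y k = 1 := by intro k hk; simp [hydef, hk]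
  have zv0 : ∀ k, k % 4 = 0 → z k = 200 := by intro k hk; simp [hzdef, hk]
  have zv1 : ∀ k, k % 4 = 1 → z k = 2 := by intro k hk; simp [hzdef, hk]
  have zv2 : ∀ k, k % 4 = 2 → z k = 100 := by intro k hk; simp [hzdef, hk]
  have zv3 : ∀ k, k % 4 = 3 → z k = 1 := by intro k hk; simp [hzdef, hk]
  refine ⟨x, y, z, 1/10, rfl, fun k => rfl, fun k => rfl, fun k => rfl, ?_, ?_⟩
  · -- shuffle
    refine ⟨fun n => 2*n + 1 - (n % 4)/2, fun n => 2*n + (n % 4)/2, ?_, ?_, ?_, ?_, ?_, ?_⟩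
    · apply strictMono_nat_of_lt_succ; intro n
      obtain ⟨q, r, hr, rfl⟩ : ∃ q r, r < 4 ∧ n = 4*q + r := ⟨n/4, n%4, by omega, by omega⟩
      interval_cases r <;> omega
    · apply strictMono_nat_of_lt_succ; intro n
      obtain ⟨q, r, hr, rfl⟩ : ∃ q r, r < 4 ∧ n = 4*q + r := ⟨n/4, n%4, by omega, by omega⟩
      interval_cases r <;> omega
    · ext m
      simp only [Set.mem_union, Set.mem_range, Set.mem_univ, iff_true]
      obtain ⟨q, r, hr, rfl⟩ : ∃ q r, r < 8 ∧ m = 8*q + r := ⟨m/8, m%8, by omega, by omega⟩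
      interval_cases r
      · exact Or.inr ⟨4*q, by omega⟩
      · exact Or.inl ⟨4*q, by omega⟩
      · exact Or.inr ⟨4*q + 1, by omega⟩
      · exact Or.inl ⟨4*q + 1, by omega⟩
      · exact Or.inl ⟨4*q + 2, by omega⟩
      · exact Or.inr ⟨4*q + 2, by omega⟩
      · exact Or.inl ⟨4*q + 3, by omega⟩
      · exact Or.inr ⟨4*q + 3, by omega⟩
    · ext m
      simp only [Set.mem_inter_iff, Set.mem_range, Set.mem_empty_iff_false, iff_false]
      rintro ⟨⟨a, ha⟩, ⟨b, hb⟩⟩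
      obtain ⟨p, r, hr, rfl⟩ : ∃ p r, r < 4 ∧ a = 4*p + r := ⟨a/4, a%4, by omega, by omega⟩
      obtain ⟨q, s, hs, rfl⟩ : ∃ q s, s < 4 ∧ b = 4*q + s := ⟨b/4, b%4, by omega, by omega⟩
      interval_cases r <;> interval_cases s <;> omega
    · intro n
      obtain ⟨q, r, hr, rfl⟩ : ∃ q r, r < 4 ∧ n = 4*q + r := ⟨n/4, n%4, by omega, by omega⟩
      interval_cases r
      · rw [zv1 _ (by beta_reduce; omega), xv0 _ (by omega)]
      · rw [zv3 _ (by beta_reduce; omega), xv1 _ (by omega)]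
      · rw [zv0 _ (by beta_reduce; omega), xv2 _ (by omega)]
      · rw [zv2 _ (by beta_reduce; omega), xv3 _ (by omega)]
    · intro n
      obtain ⟨q, r, hr, rfl⟩ : ∃ q r, r < 4 ∧ n = 4*q + r := ⟨n/4, n%4, by omega, by omega⟩
      interval_cases r
      · rw [zv0 _ (by beta_reduce; omega), yv0 _ (by omega)]
      · rw [zv2 _ (by beta_reduce; omega), yv1 _ (by omega)]
      · rw [zv1 _ (by beta_reduce; omega), yv2 _ (by omega)]
      · rw [zv3 _ (by beta_reduce; omega), yv3 _ (by omega)]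
  · -- liminf inequality
    have hx0 : ∀ k, 0 ≤ x k := by intro k; simp only [hxdef]; split_ifs <;> norm_num
    have hy0 : ∀ k, 0 ≤ y k := by intro k; simp only [hydef]; split_ifs <;> norm_num
    have hz0 : ∀ k, 0 ≤ z k := by intro k; simp only [hzdef]; split_ifs <;> norm_num
    have hx2 : ∀ k, x k ≤ 200 := by intro k; simp only [hxdef]; split_ifs <;> norm_num
    have hy2 : ∀ k, y k ≤ 200 := by intro k; simp only [hydef]; split_ifs <;> norm_num
    have hz2 : ∀ k, z k ≤ 200 := by intro k; simp only [hzdef]; split_ifs <;> norm_num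
    have hzlim : (11:ℝ) ≤ Filter.liminf
        (fun n => ∑ k ∈ Finset.range (n + 1), (1/10:ℝ) ^ (n - k) * z k) Filter.atTop := by
      apply Filter.le_liminf_of_le
      · exact Filter.IsBoundedUnder.isCoboundedUnder_ge
          (Filter.isBoundedUnder_of ⟨2000/9, fun n => S_le z hz2 n⟩)
      · rw [Filter.eventually_atTop]
        refine ⟨1, fun n hn => ?_⟩
        obtain ⟨m, rfl⟩ : ∃ m, n = m + 1 := ⟨n - 1, by omega⟩
        have hlow := S_lower z hz0 m
        have hkey : (11:ℝ) ≤ z (m+1) + (1/10) * z m := by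
          obtain ⟨q, r, hr, rfl⟩ : ∃ q r, r < 4 ∧ m = 4*q + r := ⟨m/4, m%4, by omega, by omega⟩
          interval_cases r
          · rw [zv1 _ (by omega), zv0 _ (by omega)]; norm_num
          · rw [zv2 _ (by omega), zv1 _ (by omega)]; norm_num
          · rw [zv3 _ (by omega), zv2 _ (by omega)]; norm_num
          · rw [zv0 _ (by omega), zv3 _ (by omega)]; norm_num
        linarith
    have hxlim : Filter.liminf
        (fun n => ∑ k ∈ Finset.range (n + 1), (1/10:ℝ) ^ (n - k) * x k) Filter.atTop ≤ 7/2 := by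
      apply Filter.liminf_le_of_frequently_le
      · rw [Filter.frequently_atTop]
        intro N
        exact ⟨4*N + 1, by omega,
          S_upper_special x hx2 hx0 (4*N) (xv1 _ (by omega)) (xv0 _ (by omega))⟩
      · exact Filter.isBoundedUnder_of ⟨0, fun n => S_nonneg x hx0 n⟩
    have hylim : Filter.liminf
        (fun n => ∑ k ∈ Finset.range (n + 1), (1/10:ℝ) ^ (n - k) * y k) Filter.atTop ≤ 7/2 := by
      apply Filter.liminf_le_of_frequently_le
      · rw [Filter.frequently_atTop]
        intro N
        exact ⟨4*N + 2 + 1, by omega,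
          S_upper_special y hy2 hy0 (4*N + 2) (yv3 _ (by omega)) (yv2 _ (by omega))⟩
      · exact Filter.isBoundedUnder_of ⟨0, fun n => S_nonneg y hy0 n⟩
    calc max _ _ ≤ max (7/2 : ℝ) (7/2) := max_le_max hxlim hylim
      _ < 11 := by norm_num
      _ ≤ _ := hzlim
end

section
/- Let w be a bounded infinite real sequence and γ, λ ∈ [0,1). Then the discounted past-discounted payoff converges and satisfies D_λ P_γ(w) := lim_{n→∞} Σ_{k=0}^{n} λ^k Σ_{i=0}^{k} γ^{k-i} w_i = (1/(1-γλ)) · Σ_{k=0}^{∞} λ^k w_k. -/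
/-- Discounted past-discounted payoff:
`D_λ P_γ(w) = (1/(1-γλ)) · Σ λ^k w_k` for bounded `w`. -/
theorem discountedPastDiscounted_eq
    (w : ℕ → ℝ) (C : ℝ) (hw : ∀ n, |w n| ≤ C)
    (γ lam : ℝ) (hγ0 : 0 ≤ γ) (hγ1 : γ < 1) (hl0 : 0 ≤ lam) (hl1 : lam < 1) :
    Filter.Tendsto
      (fun n => ∑ k ∈ Finset.range (n + 1),
        lam ^ k * ∑ i ∈ Finset.range (k + 1), γ ^ (k - i) * w i)
      Filter.atTop
      (nhds ((1 / (1 - γ * lam)) * ∑' k : ℕ, lam ^ k * w k)) := by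
  set f : ℕ → ℝ := fun k => (γ * lam) ^ k with hf
  set g : ℕ → ℝ := fun k => lam ^ k * w k with hg
  have hγl : |γ * lam| < 1 := by
    rw [abs_of_nonneg (mul_nonneg hγ0 hl0)]
    calc γ * lam ≤ 1 * lam := by nlinarith
    _ < 1 := by linarith
  have hsf : Summable fun k => ‖f k‖ := by
    have := summable_geometric_of_lt_one (abs_nonneg (γ * lam)) hγl
    simpa [hf, Real.norm_eq_abs, abs_pow, abs_mul] using this
  have hsg : Summable fun k => ‖g k‖ := by
    have hC : 0 ≤ C := (abs_nonneg (w 0)).trans (hw 0)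
    have hb : Summable fun k : ℕ => C * lam ^ k :=
      (summable_geometric_of_lt_one hl0 hl1).mul_left C
    refine hb.of_nonneg_of_le (fun n => norm_nonneg _) (fun n => ?_)
    simp only [hg, Real.norm_eq_abs, abs_mul, abs_pow, abs_of_nonneg hl0]
    calc lam ^ n * |w n| ≤ lam ^ n * C :=
          mul_le_mul_of_nonneg_left (hw n) (pow_nonneg hl0 n)
      _ = C * lam ^ n := mul_comm _ _
  -- rewrite the inner sums as Cauchy product terms
  have hterm : ∀ k, lam ^ k * ∑ i ∈ Finset.range (k + 1), γ ^ (k - i) * w i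
      = ∑ i ∈ Finset.range (k + 1), f i * g (k - i) := by
    intro k
    rw [Finset.mul_sum, ← Finset.sum_range_reflect]
    apply Finset.sum_congr rfl
    intro i hi
    have hik : i ≤ k := Nat.lt_succ_iff.mp (Finset.mem_range.mp hi)
    have h1 : k + 1 - 1 - i = k - i := by omega
    have h2 : k - (k - i) = i := Nat.sub_sub_self hik
    rw [h1, h2]
    simp only [hf, hg, mul_pow]
    have : lam ^ k = lam ^ (k - i) * lam ^ i := by
      rw [← pow_add, Nat.sub_add_cancel hik]
    rw [this]; ring
  have hsum : Summable fun k => ∑ i ∈ Finset.range (k + 1), f i * g (k - i) :=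
    (summable_norm_sum_mul_range_of_summable_norm hsf hsg).of_norm
  have htsum : (∑' k, ∑ i ∈ Finset.range (k + 1), f i * g (k - i))
      = (∑' k, f k) * ∑' k, g k :=
    (tsum_mul_tsum_eq_tsum_sum_range_of_summable_norm hsf hsg).symm
  have hgeo : (∑' k, f k) = 1 / (1 - γ * lam) := by
    rw [hf, tsum_geometric_of_lt_one (mul_nonneg hγ0 hl0) (lt_of_abs_lt hγl),
      one_div]
  have := (hsum.hasSum.tendsto_sum_nat).comp (Filter.tendsto_add_atTop_nat 1)
  rw [htsum, hgeo] at this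
  convert this using 2 with n
  exact Finset.sum_congr rfl fun k _ => hterm k
end

section
/- For every bounded infinite real sequence w and γ ∈ [0,1), the mean past-discounted payoff equals 1/(1-γ) times the mean payoff: liminf_{n→∞} (1/(n+1)) Σ_{k=0}^{n} Σ_{i=0}^{k} γ^{k-i} w_i = (1/(1-γ)) · liminf_{n→∞} (1/(n+1)) Σ_{k=0}^{n} w_k. -/
/-!
Writing `P k` for the past-discounted payoff, `P (k + 1) = γ * P k + w (k + 1)`, and summing this
recursion telescopes to `(1 - γ) * ∑_{k ≤ n} P k = ∑_{k ≤ n} w k - γ * P n`. The recursion also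
bounds `P` by `C / (1 - γ)`, so after dividing by `n + 1` the error term `γ * P n / (n + 1)` tends
to `0`; adding a null sequence and scaling by the positive constant `1 / (1 - γ)` commute with
`liminf` for bounded sequences.
-/

open Filter Finset Topology

section LiminfAdd

variable {ι α : Type*} [AddCommGroup α] [ConditionallyCompleteLinearOrder α] [DenselyOrdered α]
  [AddLeftMono α] [TopologicalSpace α] [OrderTopology α] {f : Filter ι} [f.NeBot]
  {u v : ι → α} {a : α}

theorem liminf_add_of_tendsto (hu_le : IsBoundedUnder (· ≤ ·) f u)
    (hu_ge : IsBoundedUnder (· ≥ ·) f u) (hv : Tendsto v f (𝓝 a)) :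
    liminf (u + v) f = liminf u f + a := by
  apply le_antisymm
  · have h := liminf_add_le hv.isBoundedUnder_ge hv.isBoundedUnder_le hu_ge
      hu_le.isCoboundedUnder_ge
    rwa [hv.limsup_eq, add_comm a, add_comm v] at h
  · have h := le_liminf_add hu_ge hu_le hv.isBoundedUnder_ge
      hv.isBoundedUnder_le.isCoboundedUnder_ge
    rwa [hv.liminf_eq] at h

end LiminfAdd

theorem Real.liminf_const_mul {ι : Type*} {f : Filter ι} [f.NeBot] {u : ι → ℝ} {c : ℝ}
    (hc : 0 ≤ c) (hu_cobdd : IsCoboundedUnder (· ≥ ·) f u) (hu_ge : IsBoundedUnder (· ≥ ·) f u) :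
    liminf (fun i => c * u i) f = c * liminf u f :=
  ((monotone_mul_left_of_nonneg hc).map_liminf_of_continuousAt u
    (continuous_const_mul c).continuousAt hu_cobdd hu_ge).symm

/-- The paper's `P^k_γ(w)`. -/
def pastDiscounted {R : Type*} [Semiring R] (γ : R) (w : ℕ → R) (k : ℕ) : R :=
  ∑ i ∈ range (k + 1), γ ^ (k - i) * w i

noncomputable def runningMean (w : ℕ → ℝ) (n : ℕ) : ℝ :=
  1 / ((n : ℝ) + 1) * ∑ k ∈ range (n + 1), w k

section PastDiscounted

variable {R : Type*}

@[simp]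
theorem pastDiscounted_zero [Semiring R] (γ : R) (w : ℕ → R) : pastDiscounted γ w 0 = w 0 := by
  simp [pastDiscounted]

theorem pastDiscounted_succ [Semiring R] (γ : R) (w : ℕ → R) (k : ℕ) :
    pastDiscounted γ w (k + 1) = γ * pastDiscounted γ w k + w (k + 1) := by
  rw [pastDiscounted, sum_range_succ, Nat.sub_self, pow_zero, one_mul, pastDiscounted, mul_sum]
  congr 1
  refine sum_congr rfl fun i hi => ?_
  rw [← mul_assoc, ← pow_succ', Nat.sub_add_comm (mem_range_succ_iff.1 hi)]

theorem one_sub_mul_sum_pastDiscounted [Ring R] (γ : R) (w : ℕ → R) (n : ℕ) :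
    (1 - γ) * ∑ k ∈ range (n + 1), pastDiscounted γ w k
      = ∑ k ∈ range (n + 1), w k - γ * pastDiscounted γ w n := by
  induction n with
  | zero => simp [sub_mul]
  | succ n ih =>
    rw [sum_range_succ, mul_add, ih, pastDiscounted_succ, sum_range_succ w (n + 1)]
    noncomm_ring

theorem norm_pastDiscounted_le [SeminormedRing R] {γ : R} {w : ℕ → R} {C : ℝ}
    (hw : ∀ i, ‖w i‖ ≤ C) (hγ : ‖γ‖ < 1) (k : ℕ) :
    ‖pastDiscounted γ w k‖ ≤ C / (1 - ‖γ‖) := by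
  have hγ' : 0 < 1 - ‖γ‖ := sub_pos.2 hγ
  have hC : 0 ≤ C := (norm_nonneg _).trans (hw 0)
  induction k with
  | zero =>
    rw [pastDiscounted_zero, le_div_iff₀ hγ']
    nlinarith [hw 0, norm_nonneg γ]
  | succ k ih =>
    calc ‖pastDiscounted γ w (k + 1)‖ ≤ ‖γ‖ * (C / (1 - ‖γ‖)) + C := by
          rw [pastDiscounted_succ]
          exact (norm_add_le _ _).trans (add_le_add
            ((norm_mul_le _ _).trans (mul_le_mul_of_nonneg_left ih (norm_nonneg _))) (hw _))
      _ = C / (1 - ‖γ‖) := by field_simp; ring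

end PastDiscounted

theorem abs_runningMean_le {w : ℕ → ℝ} {C : ℝ} (hw : ∀ n, |w n| ≤ C) (n : ℕ) :
    |runningMean w n| ≤ C := by
  have hn : (0 : ℝ) < n + 1 := by positivity
  calc |runningMean w n| ≤ 1 / ((n : ℝ) + 1) * ∑ k ∈ range (n + 1), |w k| := by
        rw [runningMean, abs_mul, abs_of_pos (by positivity)]
        gcongr
        exact abs_sum_le_sum_abs _ _
    _ ≤ 1 / ((n : ℝ) + 1) * ∑ k ∈ range (n + 1), C := by gcongr; exact hw _
    _ = C := by simp; field_simp

theorem runningMean_pastDiscounted {γ : ℝ} (hγ : γ ≠ 1) (w : ℕ → ℝ) (n : ℕ) :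
    runningMean (pastDiscounted γ w) n
      = 1 / (1 - γ) * (runningMean w n - γ * (1 / ((n : ℝ) + 1) * pastDiscounted γ w n)) := by
  have h := one_sub_mul_sum_pastDiscounted γ w n
  have hγ' : 1 - γ ≠ 0 := sub_ne_zero.2 hγ.symm
  simp only [runningMean]
  field_simp
  linear_combination h

/-- Mean past-discounted payoff equals `1/(1-γ)` times the mean payoff. -/
theorem meanPastDiscounted_eq
    (w : ℕ → ℝ) (C : ℝ) (hw : ∀ n, |w n| ≤ C)
    (γ : ℝ) (hγ0 : 0 ≤ γ) (hγ1 : γ < 1) :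
    Filter.liminf
      (fun n : ℕ => (1 / ((n : ℝ) + 1)) * ∑ k ∈ Finset.range (n + 1),
        ∑ i ∈ Finset.range (k + 1), γ ^ (k - i) * w i)
      Filter.atTop
      = (1 / (1 - γ)) *
        Filter.liminf
          (fun n : ℕ => (1 / ((n : ℝ) + 1)) * ∑ k ∈ Finset.range (n + 1), w k)
          Filter.atTop := by
  change liminf (runningMean (pastDiscounted γ w)) atTop
    = 1 / (1 - γ) * liminf (runningMean w) atTop
  have hP := norm_pastDiscounted_le (γ := γ) hw (by rwa [Real.norm_of_nonneg hγ0])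
  set e : ℕ → ℝ := fun n => -(γ * (1 / ((n : ℝ) + 1) * pastDiscounted γ w n))
  have he : Tendsto e atTop (𝓝 0) := by
    simpa [e] using ((tendsto_one_div_add_atTop_nhds_zero_nat.zero_mul_isBoundedUnder_le
      (isBoundedUnder_of ⟨_, hP⟩)).const_mul γ).neg
  obtain ⟨hmean_le, hmean_ge⟩ :=
    isBoundedUnder_le_abs.1 (isBoundedUnder_of ⟨C, abs_runningMean_le hw⟩)
  calc liminf (runningMean (pastDiscounted γ w)) atTop
      = liminf (fun n => 1 / (1 - γ) * (runningMean w + e) n) atTop := by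
        congr 1
        funext n
        rw [runningMean_pastDiscounted hγ1.ne, sub_eq_add_neg (runningMean w n)]
        rfl
    _ = 1 / (1 - γ) * liminf (runningMean w + e) atTop :=
        Real.liminf_const_mul (one_div_pos.2 (sub_pos.2 hγ1)).le
          (isBoundedUnder_le_add hmean_le he.isBoundedUnder_le).isCoboundedUnder_ge
          (isBoundedUnder_ge_add hmean_ge he.isBoundedUnder_ge)
    _ = 1 / (1 - γ) * liminf (runningMean w) atTop := by
        rw [liminf_add_of_tendsto hmean_le hmean_ge he, add_zero]
end

section
/- For a periodic sequence x with period p ≥ 1 given by repeating (a_0,...,a_{p-1}) and γ ∈ [0,1), the lower past-discounted payoff equals the minimum over residues: P_γ(x) = min_{0 ≤ r < p} lim_{m→∞} P^{mp+r}_γ(x), where each limit lim_{m→∞} P^{mp+r}_γ(x) exists and equals (Σ_{j=0}^{p-1} γ^{j} a_{(r-j) mod p}) / (1 - γ^p). -/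
open Filter Finset

noncomputable def pdS (p : ℕ) (a : ℕ → ℝ) (γ : ℝ) (n : ℕ) : ℝ :=
  ∑ k ∈ Finset.range (n + 1), γ ^ (n - k) * a (k % p)

noncomputable def pdC (p : ℕ) (a : ℕ → ℝ) (γ : ℝ) (r : ℕ) : ℝ :=
  ∑ j ∈ Finset.range p, γ ^ j * a ((r + p - j) % p)

lemma pdS_rec (p : ℕ) (hp : 1 ≤ p) (a : ℕ → ℝ) (γ : ℝ) (n : ℕ) :
    pdS p a γ (n + p) = γ ^ p * pdS p a γ n + pdC p a γ (n % p) := by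
  unfold pdS pdC
  have h : n + p + 1 = (n + 1) + p := by omega
  rw [h, Finset.sum_range_add, Finset.mul_sum]
  congr 1
  · refine Finset.sum_congr rfl fun k hk => ?_
    have hk' : k ≤ n := by simpa [Nat.lt_succ_iff] using Finset.mem_range.1 hk
    have : n + p - k = p + (n - k) := by omega
    rw [this, pow_add]; ring
  · rw [← Finset.sum_range_reflect]
    refine Finset.sum_congr rfl fun j hj => ?_
    have hj' : j < p := Finset.mem_range.1 hj
    have h1 : n + 1 + (p - 1 - j) = n + (p - j) := by omega
    have h2 : n + p - (n + (p - j)) = j := by omega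
    have h3 : (n + (p - j)) % p = (n % p + (p - j)) % p :=
      ((Nat.mod_modEq n p).add_right (p - j)).symm
    have h4 : n % p + p - j = n % p + (p - j) := by omega
    rw [h1, h2, h3, h4]

lemma pdS_formula (p : ℕ) (hp : 1 ≤ p) (a : ℕ → ℝ) (γ : ℝ)
    (hγ0 : 0 ≤ γ) (hγ1 : γ < 1) (r m : ℕ) :
    pdS p a γ (m * p + r) = pdC p a γ (r % p) / (1 - γ ^ p)
      + (γ ^ p) ^ m * (pdS p a γ r - pdC p a γ (r % p) / (1 - γ ^ p)) := by
  have hq1 : γ ^ p < 1 := pow_lt_one₀ hγ0 hγ1 (by omega)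
  have hne : 1 - γ ^ p ≠ 0 := by intro h; linarith [sub_eq_zero.mp h]
  have hC : pdC p a γ (r % p) = (pdC p a γ (r % p) / (1 - γ ^ p)) * (1 - γ ^ p) := by
    field_simp
  induction m with
  | zero => simp
  | succ m ih =>
    have h : (m + 1) * p + r = (m * p + r) + p := by ring
    have hmodeq : (m * p + r) % p = r % p := by
      rw [Nat.add_comm, Nat.add_mul_mod_self_right]
    rw [h, pdS_rec p hp a γ, hmodeq, ih, pow_succ]
    linear_combination hC

lemma pdS_tendsto (p : ℕ) (hp : 1 ≤ p) (a : ℕ → ℝ) (γ : ℝ)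
    (hγ0 : 0 ≤ γ) (hγ1 : γ < 1) (r : ℕ) :
    Tendsto (fun m => pdS p a γ (m * p + r)) atTop
      (nhds (pdC p a γ (r % p) / (1 - γ ^ p))) := by
  have hq0 : 0 ≤ γ ^ p := pow_nonneg hγ0 p
  have hq1 : γ ^ p < 1 := pow_lt_one₀ hγ0 hγ1 (by omega)
  have h : (fun m => pdS p a γ (m * p + r))
      = fun m => pdC p a γ (r % p) / (1 - γ ^ p)
        + (γ ^ p) ^ m * (pdS p a γ r - pdC p a γ (r % p) / (1 - γ ^ p)) := by
    funext m; exact pdS_formula p hp a γ hγ0 hγ1 r m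
  rw [h]
  have := ((tendsto_pow_atTop_nhds_zero_of_lt_one hq0 hq1).mul_const
      (pdS p a γ r - pdC p a γ (r % p) / (1 - γ ^ p))).const_add
      (pdC p a γ (r % p) / (1 - γ ^ p))
  simpa using this

/-- Past-discounted payoff of a periodic sequence: each residue subsequence
converges, and the liminf is the minimum over residues. -/
theorem pastDiscounted_periodic
    (p : ℕ) (hp : 1 ≤ p) (a : ℕ → ℝ) (γ : ℝ) (hγ0 : 0 ≤ γ) (hγ1 : γ < 1) :
    (∀ r < p, Filter.Tendsto
        (fun m => ∑ k ∈ Finset.range (m * p + r + 1), γ ^ (m * p + r - k) * a (k % p))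
        Filter.atTop
        (nhds ((∑ j ∈ Finset.range p, γ ^ j * a ((r + p - j) % p)) / (1 - γ ^ p)))) ∧
    Filter.liminf
        (fun n => ∑ k ∈ Finset.range (n + 1), γ ^ (n - k) * a (k % p))
        Filter.atTop
      = (Finset.range p).inf'
          (Finset.nonempty_range_iff.mpr (Nat.one_le_iff_ne_zero.mp hp))
          (fun r => (∑ j ∈ Finset.range p, γ ^ j * a ((r + p - j) % p)) / (1 - γ ^ p)) := by
  have hppos : 0 < p := hp
  have hq0 : 0 ≤ γ ^ p := pow_nonneg hγ0 p
  have hq1 : γ ^ p < 1 := pow_lt_one₀ hγ0 hγ1 (by omega)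
  set L : ℕ → ℝ := fun r => pdC p a γ r / (1 - γ ^ p) with hL
  have hne : (Finset.range p).Nonempty := Finset.nonempty_range_iff.mpr (by omega)
  constructor
  · intro r hr
    have := pdS_tendsto p hp a γ hγ0 hγ1 r
    rw [Nat.mod_eq_of_lt hr] at this
    exact this
  · show Filter.liminf (pdS p a γ) Filter.atTop = _
    have hgoal : (Finset.range p).inf'
          (Finset.nonempty_range_iff.mpr (Nat.one_le_iff_ne_zero.mp hp))
          (fun r => (∑ j ∈ Finset.range p, γ ^ j * a ((r + p - j) % p)) / (1 - γ ^ p))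
        = (Finset.range p).inf' hne L := rfl
    rw [hgoal]
    set F := (Finset.range p).inf' hne L with hF
    -- boundedness
    set B := (Finset.range p).sup' hne (fun r => |L r| + |pdS p a γ r - L r|) with hB
    have hbound : ∀ n, -B ≤ pdS p a γ n ∧ pdS p a γ n ≤ B := by
      intro n
      have hmod : n % p < p := Nat.mod_lt _ hppos
      have hform := pdS_formula p hp a γ hγ0 hγ1 (n % p) (n / p)
      have hdm : n / p * p + n % p = n := by
        rw [Nat.add_comm]; exact Nat.mod_add_div' n p
      rw [Nat.mod_mod_of_dvd _ dvd_rfl, hdm] at hform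
      have habs : |pdS p a γ n| ≤ B := by
        rw [hform]
        have h1 : |(γ ^ p) ^ (n / p)| ≤ 1 := by
          rw [abs_of_nonneg (pow_nonneg hq0 _)]
          exact pow_le_one₀ hq0 (le_of_lt hq1)
        calc |L (n % p) + (γ ^ p) ^ (n / p) * (pdS p a γ (n % p) - L (n % p))|
            ≤ |L (n % p)| + |(γ ^ p) ^ (n / p)| * |pdS p a γ (n % p) - L (n % p)| := by
              rw [← abs_mul]; exact abs_add_le _ _
          _ ≤ |L (n % p)| + 1 * |pdS p a γ (n % p) - L (n % p)| := by
              have := abs_nonneg (pdS p a γ (n % p) - L (n % p))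
              nlinarith
          _ = |L (n % p)| + |pdS p a γ (n % p) - L (n % p)| := by ring
          _ ≤ B := by
              rw [hB]
              exact Finset.le_sup' (fun r => |L r| + |pdS p a γ r - L r|)
                (Finset.mem_range.2 hmod)
      exact ⟨neg_le_of_abs_le habs, le_of_abs_le habs⟩
    have hbdd : IsBoundedUnder (· ≥ ·) atTop (pdS p a γ) :=
      Filter.isBoundedUnder_of ⟨-B, fun n => (hbound n).1⟩
    have hbdd' : IsBoundedUnder (· ≤ ·) atTop (pdS p a γ) :=
      Filter.isBoundedUnder_of ⟨B, fun n => (hbound n).2⟩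
    have hcob : IsCoboundedUnder (· ≥ ·) atTop (pdS p a γ) :=
      hbdd'.isCoboundedUnder_ge
    apply le_antisymm
    · -- liminf ≤ F
      refine le_of_forall_pos_le_add fun ε hε => ?_
      obtain ⟨r0, hr0mem, hFr0⟩ := Finset.exists_mem_eq_inf' hne L
      have hr0 : r0 < p := Finset.mem_range.1 hr0mem
      have htd := pdS_tendsto p hp a γ hγ0 hγ1 r0
      rw [Nat.mod_eq_of_lt hr0] at htd
      have hev : ∀ᶠ m in atTop, pdS p a γ (m * p + r0) ≤ F + ε := by
        refine htd.eventually (eventually_le_nhds ?_)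
        show L r0 < F + ε
        have hFL : F = L r0 := hF.trans hFr0
        rw [hFL]; linarith
      obtain ⟨M, hM⟩ := Filter.eventually_atTop.1 hev
      refine liminf_le_of_frequently_le ?_ hbdd
      refine Filter.frequently_atTop.2 fun N => ?_
      refine ⟨(max M N) * p + r0, ?_, hM _ (le_max_left _ _)⟩
      calc N ≤ max M N := le_max_right _ _
        _ ≤ (max M N) * p := Nat.le_mul_of_pos_right _ hppos
        _ ≤ (max M N) * p + r0 := Nat.le_add_right _ _
    · -- F ≤ liminf
      refine le_of_forall_pos_le_add fun ε hε => ?_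
      have key : F - ε ≤ Filter.liminf (pdS p a γ) Filter.atTop := by
        have h : ∀ r : ℕ, ∃ N : ℕ, ∀ m ≥ N, F - ε ≤ pdS p a γ (m * p + r) := by
          intro r
          have hmod : r % p < p := Nat.mod_lt _ hppos
          have hFle : F ≤ L (r % p) := Finset.inf'_le _ (Finset.mem_range.2 hmod)
          have htd := pdS_tendsto p hp a γ hγ0 hγ1 r
          have hev : ∀ᶠ m in atTop, F - ε ≤ pdS p a γ (m * p + r) := by
            refine htd.eventually (eventually_ge_nhds ?_)
            show F - ε < L (r % p)
            linarith
          exact Filter.eventually_atTop.1 hev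
        choose N hN using h
        refine le_liminf_of_le hcob ?_
        refine Filter.eventually_atTop.2 ⟨((Finset.range p).sup N + 1) * p, fun n hn => ?_⟩
        have hmod : n % p < p := Nat.mod_lt _ hppos
        have hdiv : (Finset.range p).sup N ≤ n / p := by
          rw [Nat.le_div_iff_mul_le hppos]
          calc (Finset.range p).sup N * p ≤ ((Finset.range p).sup N + 1) * p :=
              Nat.mul_le_mul_right p (by omega)
            _ ≤ n := hn
        have hNle : N (n % p) ≤ n / p :=
          le_trans (Finset.le_sup (Finset.mem_range.2 hmod)) hdiv
        have := hN (n % p) (n / p) hNle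
        have hdm : n / p * p + n % p = n := by
          rw [Nat.add_comm]; exact Nat.mod_add_div' n p
        rwa [hdm] at this
      linarith
end

section
/- In the two-state one-player game arena of Figure 1 with γ = 1/2, no positional (pure stationary) strategy is optimal for minimizing the past-discounted payoff: every play consistent with a positional strategy has P_γ value at least -2, whereas there exists a play π♯ (choosing action b for increasingly long consecutive stretches interleaved with action a) with P_γ(π♯) = -3. -/
open Filter

namespace PDAux

noncomputable def S (w : ℕ → ℝ) (n : ℕ) : ℝ :=
  ∑ k ∈ Finset.range (n + 1), (1/2 : ℝ) ^ (n - k) * w k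

lemma S_zero (w : ℕ → ℝ) : S w 0 = w 0 := by simp [S]

lemma S_succ (w : ℕ → ℝ) (n : ℕ) : S w (n+1) = (1/2) * S w n + w (n+1) := by
  unfold S
  rw [Finset.sum_range_succ, Finset.mul_sum]
  congr 1
  · apply Finset.sum_congr rfl
    intro k hk
    rw [Finset.mem_range] at hk
    have h : n + 1 - k = (n - k) + 1 := by omega
    rw [h, pow_succ]
    ring
  · simp

section Play

variable (s : ℕ → Bool) (w : ℕ → ℝ)

def IsPlayH : Prop :=
  s 0 = false ∧ ∀ n,
    (s n = false → w n = 4 ∧ s (n + 1) = true) ∧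
    (s n = true → (w n = -2 ∧ s (n + 1) = false) ∨ (w n = -1 ∧ s (n + 1) = true))

lemma bounds (h : IsPlayH s w) :
    ∀ n, (-3 ≤ S w n ∧ S w n ≤ 8) ∧ (s (n+1) = true → -2 ≤ S w n) := by
  obtain ⟨h0, hst⟩ := h
  intro n
  induction n with
  | zero =>
    have h4 : w 0 = 4 := ((hst 0).1 h0).1
    rw [S_zero, h4]; norm_num
  | succ n ih =>
    obtain ⟨⟨hl, hu⟩, ht⟩ := ih
    rw [S_succ]
    rcases Bool.eq_false_or_eq_true (s (n+1)) with h | h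
    · -- s (n+1) = true
      have h2 : -2 ≤ S w n := ht h
      rcases (hst (n+1)).2 h with ⟨hw, hs⟩ | ⟨hw, hs⟩
      · rw [hw]
        refine ⟨⟨by linarith, by linarith⟩, ?_⟩
        intro h'; rw [hs] at h'; simp at h'
      · rw [hw]
        exact ⟨⟨by linarith, by linarith⟩, fun _ => by linarith⟩
    · -- s (n+1) = false
      obtain ⟨hw, hs⟩ := (hst (n+1)).1 h
      rw [hw]
      exact ⟨⟨by linarith, by linarith⟩, fun _ => by linarith⟩

lemma pos_true (h : IsPlayH s w) (hc : ∀ n, s n = true → w n = -1) :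
    ∀ n, -2 ≤ S w n := by
  obtain ⟨h0, hst⟩ := h
  intro n
  induction n with
  | zero =>
    have h4 : w 0 = 4 := ((hst 0).1 h0).1
    rw [S_zero, h4]; norm_num
  | succ n ih =>
    rw [S_succ]
    rcases Bool.eq_false_or_eq_true (s (n+1)) with h | h
    · rw [hc (n+1) h]; linarith
    · rw [((hst (n+1)).1 h).1]; linarith

lemma pos_false (h : IsPlayH s w) (hc : ∀ n, s n = true → w n = -2) :
    ∀ n, -2 ≤ S w n ∧ (s (n+1) = true → 0 ≤ S w n) := by
  obtain ⟨h0, hst⟩ := h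
  intro n
  induction n with
  | zero =>
    have h4 : w 0 = 4 := ((hst 0).1 h0).1
    rw [S_zero, h4]; norm_num
  | succ n ih =>
    obtain ⟨hl, ht⟩ := ih
    rw [S_succ]
    rcases Bool.eq_false_or_eq_true (s (n+1)) with h | h
    · -- true
      have h0' : 0 ≤ S w n := ht h
      rw [hc (n+1) h]
      have hw2 : w (n+1) = -2 := hc (n+1) h
      rcases (hst (n+1)).2 h with ⟨hw, hs⟩ | ⟨hw, hs⟩
      · refine ⟨by linarith, ?_⟩
        intro h'; rw [hs] at h'; simp at h'
      · rw [hw2] at hw; norm_num at hw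
    · -- false
      obtain ⟨hw, hs⟩ := (hst (n+1)).1 h
      rw [hw]
      exact ⟨by linarith, fun _ => by linarith⟩

end Play

/-! ### The history-dependent play -/

def step : Bool × ℕ × ℕ → Bool × ℕ × ℕ
  | (false, r, b) => (true, r, b)
  | (true, 0, b) => (false, b, b+1)
  | (true, r+1, b) => (true, r, b)

def aux : ℕ → Bool × ℕ × ℕ
  | 0 => (false, 0, 1)
  | n+1 => step (aux n)

noncomputable def wsharp (n : ℕ) : ℝ :=
  match aux n with
  | (false, _, _) => 4
  | (true, 0, _) => -2
  | (true, _+1, _) => -1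

def ssharp (n : ℕ) : Bool := (aux n).1

lemma sharp_play : IsPlayH ssharp wsharp := by
  constructor
  · rfl
  · intro n
    constructor
    · intro hf
      rcases h : aux n with ⟨b0, r, b⟩
      rw [ssharp, h] at hf; subst hf
      constructor
      · simp [wsharp, h]
      · simp [ssharp, aux, h, step]
    · intro htr
      rcases h : aux n with ⟨b0, r, b⟩
      rw [ssharp, h] at htr; subst htr
      rcases r with _ | r
      · left
        constructor
        · simp [wsharp, h]
        · simp [ssharp, aux, h, step]
      · right
        constructor
        · simp [wsharp, h]
        · simp [ssharp, aux, h, step]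

lemma runA : ∀ (i r b n : ℕ), aux n = (true, r, b) → i ≤ r →
    aux (n + i) = (true, r - i, b) := by
  intro i
  induction i with
  | zero => intro r b n h _; simpa using h
  | succ i ih =>
    intro r b n h hle
    have h1 : aux (n + i) = (true, r - i, b) := ih r b n h (by omega)
    obtain ⟨m, hm⟩ : ∃ m, r - i = m + 1 := ⟨r - (i+1), by omega⟩
    have : n + (i + 1) = (n + i) + 1 := by ring
    rw [this, aux, h1, hm]
    have hrm : r - (i+1) = m := by omega
    rw [hrm]
    rfl

lemma runS : ∀ (i r b n : ℕ), aux n = (true, r, b) → i < r →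
    S wsharp (n + i) = (S wsharp n + 2) / 2^i - 2 := by
  intro i
  induction i with
  | zero => intro r b n _ _; simp
  | succ i ih =>
    intro r b n h hlt
    have h1 : S wsharp (n + i) = (S wsharp n + 2) / 2^i - 2 := ih r b n h (by omega)
    have h2 : aux (n + (i+1)) = (true, r - (i+1), b) := runA (i+1) r b n h (by omega)
    obtain ⟨m, hm⟩ : ∃ m, r - (i+1) = m + 1 := ⟨r - (i+2), by omega⟩
    rw [hm] at h2
    have hw : wsharp (n + (i+1)) = -1 := by simp [wsharp, h2]
    have hn : n + (i+1) = (n + i) + 1 := by ring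
    rw [hn] at hw ⊢
    rw [S_succ, hw, h1, pow_succ]
    have : (2:ℝ)^i ≠ 0 := by positivity
    field_simp
    ring

lemma blockStart : ∀ k : ℕ, ∃ t, k ≤ t ∧ aux t = (false, k, k+1) := by
  intro k
  induction k with
  | zero => exact ⟨0, le_refl 0, rfl⟩
  | succ k ih =>
    obtain ⟨t, hkt, ht⟩ := ih
    have h1 : aux (t + 1) = (true, k, k+1) := by rw [aux, ht]; rfl
    have h2 : aux (t + 1 + k) = (true, 0, k+1) := by
      have := runA k k (k+1) (t+1) h1 (le_refl k)
      simpa using this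
    refine ⟨t + 1 + k + 1, by omega, ?_⟩
    rw [aux, h2]
    rfl

lemma blocks : ∀ k : ℕ, ∃ n, k ≤ n ∧ S wsharp n ≤ -3 + 10 / 2^k := by
  intro k
  obtain ⟨t, hkt, ht⟩ := blockStart k
  have h1 : aux (t + 1) = (true, k, k+1) := by rw [aux, ht]; rfl
  have hb := bounds ssharp wsharp sharp_play
  have hSt1 : S wsharp (t+1) ≤ 8 := (hb (t+1)).1.2
  rcases Nat.eq_zero_or_pos k with hk0 | hkpos
  · subst hk0
    refine ⟨t + 1, by omega, ?_⟩
    have hw : wsharp (t+1) = -2 := by simp [wsharp, h1]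
    have hSt : S wsharp t ≤ 8 := (hb t).1.2
    rw [S_succ, hw]
    norm_num
    linarith
  · -- k ≥ 1
    obtain ⟨m, hm⟩ : ∃ m, k = m + 1 := ⟨k - 1, by omega⟩
    have hrun : S wsharp (t + 1 + m) = (S wsharp (t+1) + 2) / 2^m - 2 :=
      runS m k (k+1) (t+1) h1 (by omega)
    have h2 : aux (t + 1 + m + 1) = (true, 0, k+1) := by
      have := runA (m+1) k (k+1) (t+1) h1 (by omega)
      have he : t + 1 + (m + 1) = t + 1 + m + 1 := by ring
      rw [he] at this
      have hz : k - (m+1) = 0 := by omega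
      rwa [hz] at this
    have hw : wsharp (t + 1 + m + 1) = -2 := by simp [wsharp, h2]
    refine ⟨t + 1 + m + 1, by omega, ?_⟩
    rw [S_succ, hw, hrun]
    have hpow : (0:ℝ) < 2^m := by positivity
    have hkey : (S wsharp (t+1) + 2) / 2^m ≤ 10 / 2^m := by
      gcongr
      linarith
    have h2k : (2:ℝ)^k = 2^m * 2 := by rw [hm, pow_succ]
    have hdd : (10:ℝ) / (2^m * 2) = 10 / 2^m / 2 := (div_div 10 _ 2).symm
    rw [h2k, hdd]
    linarith

end PDAux


/-- In the two-state one-player arena of Figure 1 with `γ = 1/2`: every play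
consistent with a positional strategy has past-discounted payoff at least `-2`,
while some (history-dependent) play achieves payoff `-3`. -/
theorem pastDiscounted_positional_not_optimal :
    let γ : ℝ := 1 / 2
    let P : (ℕ → ℝ) → ℝ := fun w =>
      Filter.liminf (fun n => ∑ k ∈ Finset.range (n + 1), γ ^ (n - k) * w k)
        Filter.atTop
    -- states: `false` is s₀, `true` is s₁
    let IsPlay : (ℕ → Bool) → (ℕ → ℝ) → Prop := fun s w =>
      s 0 = false ∧ ∀ n,
        (s n = false → w n = 4 ∧ s (n + 1) = true) ∧
        (s n = true → (w n = -2 ∧ s (n + 1) = false) ∨ (w n = -1 ∧ s (n + 1) = true))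
    (∀ s w, IsPlay s w →
        (∃ c : Bool, ∀ n, s n = true → w n = if c then -1 else -2) →
        -2 ≤ P w) ∧
    (∃ s w, IsPlay s w ∧ P w = -3) := by
  intro γ P IsPlay
  constructor
  · intro s w hpl hc
    have hpl' : PDAux.IsPlayH s w := hpl
    show -2 ≤ Filter.liminf (PDAux.S w) Filter.atTop
    have hcb : Filter.IsCoboundedUnder (· ≥ ·) Filter.atTop (PDAux.S w) :=
      Filter.isCoboundedUnder_ge_of_le _ fun n => (PDAux.bounds s w hpl' n).1.2
    apply Filter.le_liminf_of_le hcb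
    apply Filter.Eventually.of_forall
    obtain ⟨c, hc⟩ := hc
    rcases c with _ | _
    · -- c = false : always -2
      simp only [if_neg Bool.false_ne_true] at hc
      exact fun n => (PDAux.pos_false s w hpl' (by simpa using hc) n).1
    · -- c = true : always -1
      exact fun n => PDAux.pos_true s w hpl' (by simpa using hc) n
  · refine ⟨PDAux.ssharp, PDAux.wsharp, PDAux.sharp_play, ?_⟩
    show Filter.liminf (PDAux.S PDAux.wsharp) Filter.atTop = -3
    have hb := PDAux.bounds PDAux.ssharp PDAux.wsharp PDAux.sharp_play
    have hbdd : Filter.IsBoundedUnder (· ≥ ·) Filter.atTop (PDAux.S PDAux.wsharp) :=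
      Filter.isBoundedUnder_of ⟨-3, fun n => (hb n).1.1⟩
    apply le_antisymm
    · apply le_of_forall_pos_le_add
      intro ε hε
      obtain ⟨k, hk⟩ : ∃ k : ℕ, (10:ℝ) / 2^k < ε := by
        obtain ⟨k, hk⟩ := exists_pow_lt_of_lt_one (show (0:ℝ) < ε/10 by linarith)
          (show (1/2 : ℝ) < 1 by norm_num)
        refine ⟨k, ?_⟩
        have h1 : ((1:ℝ)/2)^k = 1 / 2^k := by rw [div_pow, one_pow]
        have h2 : (10:ℝ) / 2^k = 10 * (1 / 2^k) := by ring
        rw [h2, ← h1]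
        linarith
      have hfreq : ∃ᶠ n in Filter.atTop, PDAux.S PDAux.wsharp n ≤ -3 + 10 / 2^k := by
        rw [Filter.frequently_atTop]
        intro a
        obtain ⟨n, hn1, hn2⟩ := PDAux.blocks (max k a)
        refine ⟨n, le_trans (le_max_right k a) hn1, ?_⟩
        have hmono : (10:ℝ) / 2^(max k a) ≤ 10 / 2^k := by
          gcongr
          · norm_num
          · exact le_max_left k a
        linarith
      have hlim := Filter.liminf_le_of_frequently_le hfreq hbdd
      linarith
    · have hcb : Filter.IsCoboundedUnder (· ≥ ·) Filter.atTop (PDAux.S PDAux.wsharp) :=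
        Filter.isCoboundedUnder_ge_of_le _ fun n => (hb n).1.2
      exact Filter.le_liminf_of_le hcb
        (Filter.Eventually.of_forall fun n => (hb n).1.1)
end
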